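/- The first Adam step does not preserve timescale ratios: with zero initialization m₀ = v₀ = 0, decay rates β₁, β₂ ∈ [0,1), learning rate α > 0, ε > 0, and scalar gradient g̃₁ = κ·g with g ≠ 0 and κ > 0, the bias-corrected moments at t = 1 are m̂₁ = κ·g and v̂₁ = (κ·g)², so the magnitude of the Adam update α·m̂₁/(√(v̂₁)+ε) equals α·|κ·g|/(|κ·g| + ε). Consequently, for any 0 < κ₂ < κ₁, the ratio of first-step update magnitudes satisfies ( α·|κ₂·g|/(|κ₂·g|+ε) ) / ( α·|κ₁·g|/(|κ₁·g|+ε) ) > κ₂/κ₁, strictly exceeding the proportional ratio κ₂/κ₁ that SGD would produce. -/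

import Mathlib

/-!
At `t = 1` the bias corrections exactly undo the `(1 - β)` factors, so the first Adam step
on a gradient `x` has magnitude `α |x| / (|x| + ε)`. Per unit of gradient this is
`α / (|x| + ε)`, which is strictly decreasing in `|x|`: the smaller timescale ratio receives
a relatively larger update than SGD would give it.
-/

lemma bias_corrected_moment_one (β x : ℝ) (hβ : β ≠ 1) :
    (β * 0 + (1 - β) * x) / (1 - β ^ 1) = x := by
  have : 1 - β ≠ 0 := sub_ne_zero.mpr hβ.symm
  field_simp
  ring

lemma abs_adam_step (α ε x : ℝ) (hα : 0 ≤ α) (hε : 0 ≤ ε) :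
    |α * x / (Real.sqrt (x ^ 2) + ε)| = α * |x| / (|x| + ε) := by
  rw [Real.sqrt_sq_eq_abs, abs_div, abs_mul, abs_of_nonneg hα,
    abs_of_nonneg (by positivity : 0 ≤ |x| + ε)]

lemma div_lt_saturated_div {α ε s₁ s₂ : ℝ} (hα : 0 < α) (hε : 0 < ε) (hs₂ : 0 < s₂)
    (h : s₂ < s₁) :
    s₂ / s₁ < (α * s₂ / (s₂ + ε)) / (α * s₁ / (s₁ + ε)) := by
  have hs₁ : 0 < s₁ := hs₂.trans h
  have split : (α * s₂ / (s₂ + ε)) / (α * s₁ / (s₁ + ε)) =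
      s₂ / s₁ * ((s₁ + ε) / (s₂ + ε)) := by
    field_simp
  rw [split]
  exact lt_mul_of_one_lt_right (by positivity) ((one_lt_div (by positivity)).mpr (by linarith))

/-- The first Adam step does not preserve timescale ratios: with zero initialization
`m₀ = v₀ = 0`, decay rates `β₁, β₂ ∈ [0,1)`, `α > 0`, `ε > 0`, and scalar gradient
`κ·g` with `g ≠ 0` and `κ > 0`, the bias-corrected moments at `t = 1` are
`m̂₁ = κ·g` and `v̂₁ = (κ·g)²`, the Adam update magnitude equals
`α·|κ·g|/(|κ·g| + ε)`, and for any `0 < κ₂ < κ₁` the ratio of first-step update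
magnitudes strictly exceeds `κ₂/κ₁`. -/
theorem adam_first_step_not_proportional
    (α ε β₁ β₂ g : ℝ)
    (hα : 0 < α) (hε : 0 < ε)
    (hβ₁ : β₁ ∈ Set.Ico (0 : ℝ) 1) (hβ₂ : β₂ ∈ Set.Ico (0 : ℝ) 1)
    (hg : g ≠ 0) :
    (∀ κ : ℝ, 0 < κ →
      (β₁ * 0 + (1 - β₁) * (κ * g)) / (1 - β₁ ^ 1) = κ * g ∧
      (β₂ * 0 + (1 - β₂) * (κ * g) ^ 2) / (1 - β₂ ^ 1) = (κ * g) ^ 2 ∧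
      |α * (κ * g) / (Real.sqrt ((κ * g) ^ 2) + ε)| =
        α * |κ * g| / (|κ * g| + ε)) ∧
    (∀ κ₁ κ₂ : ℝ, 0 < κ₂ → κ₂ < κ₁ →
      κ₂ / κ₁ <
        (α * |κ₂ * g| / (|κ₂ * g| + ε)) / (α * |κ₁ * g| / (|κ₁ * g| + ε))) := by
  refine ⟨fun κ _ => ⟨bias_corrected_moment_one β₁ _ hβ₁.2.ne,
    bias_corrected_moment_one β₂ _ hβ₂.2.ne, abs_adam_step α ε _ hα.le hε.le⟩, ?_⟩
  intro κ₁ κ₂ hκ₂ hκ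
  have hκ₁ : 0 < κ₁ := hκ₂.trans hκ
  have hg' : 0 < |g| := abs_pos.mpr hg
  rw [abs_mul, abs_mul, abs_of_pos hκ₁, abs_of_pos hκ₂,
    ← mul_div_mul_right κ₂ κ₁ hg'.ne']
  exact div_lt_saturated_div hα hε (mul_pos hκ₂ hg') (mul_lt_mul_of_pos_right hκ hg')
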